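/- For n ≥ 1, the signed count over all overpartitions π of n that contain at least one non-overlined part, weighted by (-1)^{ℓ_{O≤N}(π)}, equals D(n), the number of partitions of n into distinct parts. Here ℓ_{O≤N}(π) is the number of overlined parts of π of size less than or equal to the size of the largest non-overlined part of π. -/

import Mathlib

open scoped Classical

/-- An overpartition of `n`: a finite set of overlined part sizes (the first
occurrence of a size may be overlined, so overlined parts are distinct)
together with a multiset of non-overlined parts, all parts positive,
with total sum `n`. -/
structure Overpartition (n : ℕ) where
  overlined : Finset ℕ
  plain : Multiset ℕ
  over_pos : ∀ x ∈ overlined, 0 < x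
  plain_pos : ∀ x ∈ plain, 0 < x
  sum_eq : (∑ x ∈ overlined, x) + plain.sum = n

/-! Write `N` for the largest plain part and `R` for the plain parts with one copy of `N`
removed. Call `v` togglable if it is an overlined part `≤ N` or a part of `R`. Moving the
largest togglable value between the overlined parts and `R` keeps `N` and the set of togglable
values, and changes `ℓ_{O≤N}` by one: a sign-reversing involution. Its fixed points have `R = 0`
and all overlined parts `> N`, and adjoining `N` to the overlined parts, as their new smallest
part, is a bijection from them onto the partitions of `n` into distinct parts. -/

open Finset

theorem Multiset.sup_mem_of_ne_zero {α : Type*} [LinearOrder α] [OrderBot α] {s : Multiset α}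
    (hs : s ≠ 0) : s.sup ∈ s := by
  obtain ⟨a, ha, hsup⟩ :=
    Finset.exists_mem_eq_sup s.toFinset (Multiset.toFinset_nonempty.2 hs) id
  rw [Finset.sup_def, Multiset.toFinset_val, Multiset.map_id, Multiset.sup_dedup] at hsup
  exact hsup ▸ Multiset.mem_toFinset.1 ha

theorem Multiset.cons_eq_cons_iff_of_forall_lt {α : Type*} [LinearOrder α] {a b : α}
    {s t : Multiset α} (hs : ∀ x ∈ s, a < x) (ht : ∀ x ∈ t, b < x) :
    a ::ₘ s = b ::ₘ t ↔ a = b ∧ s = t := by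
  refine ⟨fun h => ?_, fun ⟨hab, hst⟩ => hab ▸ hst ▸ rfl⟩
  suffices hab : a = b from ⟨hab, (Multiset.cons_inj_right a).1 (hab ▸ h)⟩
  have ha : a ∈ b ::ₘ t := h ▸ Multiset.mem_cons_self a s
  have hb : b ∈ a ::ₘ s := h ▸ Multiset.mem_cons_self b t
  rcases Multiset.mem_cons.1 ha with hab | hat
  · exact hab
  rcases Multiset.mem_cons.1 hb with hba | hbs
  · exact hba.symm
  exact absurd (hs b hbs) (ht a hat).asymm

theorem Finset.sum_neg_one_pow_eq_card_even_sub_card_odd {α : Type*} (s : Finset α)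
    (f : α → ℕ) :
    ∑ x ∈ s, (-1 : ℤ) ^ f x = #{x ∈ s | Even (f x)} - #{x ∈ s | Odd (f x)} := by
  rw [card_filter, card_filter]
  push_cast
  rw [← sum_sub_distrib]
  refine sum_congr rfl fun x _ => ?_
  rcases Nat.even_or_odd (f x) with h | h
  · simp [h.neg_one_pow, Nat.not_odd_iff_even.2 h]
  · simp [h.neg_one_pow, Nat.not_even_iff_odd.2 h]

namespace Overpartition

variable {n : ℕ}

@[ext] lemma ext {π₁ π₂ : Overpartition n} (ho : π₁.overlined = π₂.overlined)
    (hp : π₁.plain = π₂.plain) : π₁ = π₂ := by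
  cases π₁; cases π₂; simp_all

lemma sum_overlined_eq (π : Overpartition n) :
    ∑ x ∈ π.overlined, x = π.overlined.val.sum := by
  rw [sum_eq_multiset_sum, Multiset.map_id']

lemma overlined_subset_range (π : Overpartition n) : π.overlined ⊆ range (n + 1) :=
  fun _ hx => mem_range_succ_iff.2 <| (single_le_sum (fun _ _ => Nat.zero_le _) hx).trans <|
    π.sum_eq ▸ Nat.le_add_right _ _

def toPartition (π : Overpartition n) : n.Partition where
  parts := π.plain + π.overlined.val
  parts_pos hx := (Multiset.mem_add.1 hx).elim (π.plain_pos _) (π.over_pos _)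
  parts_sum := by rw [Multiset.sum_add, ← sum_overlined_eq, add_comm, π.sum_eq]

instance : Finite (Overpartition n) :=
  Finite.of_injective (fun π : Overpartition n =>
      (π.toPartition, (⟨π.overlined, mem_powerset.2 π.overlined_subset_range⟩ :
        (range (n + 1)).powerset))) fun π₁ π₂ h => by
    simp only [Prod.mk.injEq, Subtype.mk.injEq, Nat.Partition.ext_iff, toPartition] at h
    exact ext h.2 (add_right_cancel (h.2 ▸ h.1))

noncomputable instance : Fintype (Overpartition n) := Fintype.ofFinite _

variable {π : Overpartition n} {v x : ℕ}

/-- `N` in the paper (`0` if there are no plain parts). -/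
def largest (π : Overpartition n) : ℕ := π.plain.sup

def rest (π : Overpartition n) : Multiset ℕ := π.plain.erase π.largest

lemma le_largest (hx : x ∈ π.plain) : x ≤ π.largest := Multiset.le_sup hx

lemma mem_plain_of_mem_rest (hx : x ∈ π.rest) : x ∈ π.plain := Multiset.mem_of_mem_erase hx

lemma le_largest_of_mem_rest (hx : x ∈ π.rest) : x ≤ π.largest :=
  le_largest (mem_plain_of_mem_rest hx)

lemma largest_mem (h : π.plain ≠ 0) : π.largest ∈ π.plain := Multiset.sup_mem_of_ne_zero h

lemma plain_eq_largest_cons_rest (h : π.plain ≠ 0) : π.plain = π.largest ::ₘ π.rest :=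
  (Multiset.cons_erase (largest_mem h)).symm

lemma exists_le_plain_iff (h : π.plain ≠ 0) :
    (∃ y ∈ π.plain, x ≤ y) ↔ x ≤ π.largest :=
  ⟨fun ⟨_, hy, hxy⟩ => hxy.trans (le_largest hy),
    fun hx => ⟨_, largest_mem h, hx⟩⟩

lemma largest_eq_of_plain_eq_cons {m : ℕ} {s : Multiset ℕ} (hπ : π.plain = m ::ₘ s)
    (hs : ∀ x ∈ s, x ≤ m) : π.largest = m := by
  rw [largest, hπ, Multiset.sup_cons, sup_eq_left]
  exact Multiset.sup_le.2 hs

def unoverline (π : Overpartition n) (v : ℕ) (hv : v ∈ π.overlined) : Overpartition n where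
  overlined := π.overlined.erase v
  plain := v ::ₘ π.plain
  over_pos x hx := π.over_pos x (mem_of_mem_erase hx)
  plain_pos := Multiset.forall_mem_cons.2 ⟨π.over_pos v hv, π.plain_pos⟩
  sum_eq := by rw [Multiset.sum_cons, ← add_assoc, sum_erase_add _ _ hv, π.sum_eq]

def overline (π : Overpartition n) (v : ℕ) (hv : v ∈ π.plain) (hv' : v ∉ π.overlined) :
    Overpartition n where
  overlined := insert v π.overlined
  plain := π.plain.erase v
  over_pos := forall_mem_insert _ _ _ |>.2 ⟨π.plain_pos v hv, π.over_pos⟩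
  plain_pos x hx := π.plain_pos x (Multiset.mem_of_mem_erase hx)
  sum_eq := by rw [sum_insert hv', add_assoc, add_left_comm, Multiset.sum_erase hv, π.sum_eq]

def togglable (π : Overpartition n) : Finset ℕ :=
  {x ∈ π.overlined | x ≤ π.largest} ∪ π.rest.toFinset

lemma mem_togglable :
    v ∈ π.togglable ↔ v ∈ π.overlined ∧ v ≤ π.largest ∨ v ∈ π.rest := by
  simp [togglable]

lemma le_largest_of_mem_togglable (hv : v ∈ π.togglable) : v ≤ π.largest :=
  (mem_togglable.1 hv).elim And.right le_largest_of_mem_rest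

lemma mem_rest_of_mem_togglable (hv : v ∈ π.togglable) (hv' : v ∉ π.overlined) :
    v ∈ π.rest :=
  (mem_togglable.1 hv).resolve_left fun h => hv' h.1

def toggleAt (π : Overpartition n) (v : ℕ) (hv : v ∈ π.togglable) : Overpartition n :=
  if hv' : v ∈ π.overlined then π.unoverline v hv'
  else π.overline v (mem_plain_of_mem_rest (mem_rest_of_mem_togglable hv hv')) hv'

section ToggleAt

variable (hv : v ∈ π.togglable)

lemma toggleAt_congr {w : ℕ} (hvw : v = w) (hw : w ∈ π.togglable) :
    π.toggleAt v hv = π.toggleAt w hw := by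
  subst hvw; rfl

lemma overlined_toggleAt_of_mem (hO : v ∈ π.overlined) :
    (π.toggleAt v hv).overlined = π.overlined.erase v := by
  rw [toggleAt, dif_pos hO]; rfl

lemma overlined_toggleAt_of_notMem (hO : v ∉ π.overlined) :
    (π.toggleAt v hv).overlined = insert v π.overlined := by
  rw [toggleAt, dif_neg hO]; rfl

lemma plain_toggleAt_of_mem (hO : v ∈ π.overlined) :
    (π.toggleAt v hv).plain = v ::ₘ π.plain := by
  rw [toggleAt, dif_pos hO]; rfl

lemma plain_toggleAt_of_notMem (hO : v ∉ π.overlined) :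
    (π.toggleAt v hv).plain = π.plain.erase v := by
  rw [toggleAt, dif_neg hO]; rfl

lemma largest_toggleAt (h : π.plain ≠ 0) : (π.toggleAt v hv).largest = π.largest := by
  by_cases hO : v ∈ π.overlined
  · rw [largest, plain_toggleAt_of_mem hv hO, Multiset.sup_cons]
    exact sup_eq_right.2 (le_largest_of_mem_togglable hv)
  · refine largest_eq_of_plain_eq_cons (m := π.largest) (s := π.rest.erase v) ?_
      fun _ hx => le_largest_of_mem_rest (Multiset.mem_of_mem_erase hx)
    rw [plain_toggleAt_of_notMem hv hO, plain_eq_largest_cons_rest h,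
      Multiset.erase_cons_tail_of_mem (mem_rest_of_mem_togglable hv hO)]

lemma rest_toggleAt_of_mem (h : π.plain ≠ 0) (hO : v ∈ π.overlined) :
    (π.toggleAt v hv).rest = v ::ₘ π.rest := by
  rw [rest, largest_toggleAt hv h, plain_toggleAt_of_mem hv hO,
    Multiset.erase_cons_tail_of_mem (largest_mem h)]
  rfl

lemma rest_toggleAt_of_notMem (h : π.plain ≠ 0) (hO : v ∉ π.overlined) :
    (π.toggleAt v hv).rest = π.rest.erase v := by
  rw [rest, largest_toggleAt hv h, plain_toggleAt_of_notMem hv hO, Multiset.erase_comm]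
  rfl

lemma plain_toggleAt_ne_zero (h : π.plain ≠ 0) : (π.toggleAt v hv).plain ≠ 0 := by
  by_cases hO : v ∈ π.overlined
  · simp [plain_toggleAt_of_mem hv hO]
  · rw [plain_toggleAt_of_notMem hv hO, plain_eq_largest_cons_rest h,
      Multiset.erase_cons_tail_of_mem (mem_rest_of_mem_togglable hv hO)]
    exact Multiset.cons_ne_zero

lemma toggleAt_ne : π.toggleAt v hv ≠ π := by
  intro heq
  have hO := congrArg overlined heq
  by_cases hv' : v ∈ π.overlined
  · rw [overlined_toggleAt_of_mem hv hv'] at hO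
    exact notMem_erase v π.overlined (hO.symm ▸ hv')
  · rw [overlined_toggleAt_of_notMem hv hv'] at hO
    exact hv' (hO ▸ mem_insert_self v _)

lemma togglable_toggleAt (h : π.plain ≠ 0) : (π.toggleAt v hv).togglable = π.togglable := by
  have hvN := le_largest_of_mem_togglable hv
  ext w
  rw [mem_togglable, mem_togglable, largest_toggleAt hv h]
  by_cases hO : v ∈ π.overlined
  · rw [overlined_toggleAt_of_mem hv hO, rest_toggleAt_of_mem hv h hO]
    by_cases hw : w = v
    · subst hw; simp [hO, hvN]
    · simp [hw]
  · have hR := mem_rest_of_mem_togglable hv hO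
    rw [overlined_toggleAt_of_notMem hv hO, rest_toggleAt_of_notMem hv h hO]
    by_cases hw : w = v
    · subst hw; simp [hR, hvN]
    · simp [hw, Multiset.mem_erase_of_ne hw]

lemma toggleAt_toggleAt (hv' : v ∈ (π.toggleAt v hv).togglable) :
    (π.toggleAt v hv).toggleAt v hv' = π := by
  by_cases hO : v ∈ π.overlined
  · have hO' : v ∉ (π.toggleAt v hv).overlined := by
      simp [overlined_toggleAt_of_mem hv hO]
    ext1
    · rw [overlined_toggleAt_of_notMem hv' hO', overlined_toggleAt_of_mem hv hO, insert_erase hO]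
    · rw [plain_toggleAt_of_notMem hv' hO', plain_toggleAt_of_mem hv hO, Multiset.erase_cons_head]
  · have hO' : v ∈ (π.toggleAt v hv).overlined := by
      simp [overlined_toggleAt_of_notMem hv hO]
    ext1
    · rw [overlined_toggleAt_of_mem hv' hO', overlined_toggleAt_of_notMem hv hO, erase_insert hO]
    · rw [plain_toggleAt_of_mem hv' hO', plain_toggleAt_of_notMem hv hO,
        Multiset.cons_erase (mem_plain_of_mem_rest (mem_rest_of_mem_togglable hv hO))]

end ToggleAt

def toggle (π : Overpartition n) (h : π.togglable.Nonempty) : Overpartition n :=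
  π.toggleAt _ (max'_mem _ h)

lemma toggle_toggle (h : π.plain ≠ 0) (hne : π.togglable.Nonempty)
    (hne' : (π.toggle hne).togglable.Nonempty) : (π.toggle hne).toggle hne' = π := by
  have hmax : (π.toggle hne).togglable.max' hne' = π.togglable.max' hne := by
    simp only [toggle, togglable_toggleAt _ h]
  exact (toggleAt_congr _ hmax (hmax ▸ max'_mem _ hne')).trans (toggleAt_toggleAt _ _)

/-- `ℓ_{O≤N}(π)` is the cardinality of this set. -/
noncomputable def lowOverlined (π : Overpartition n) : Finset ℕ :=
  {x ∈ π.overlined | ∃ y ∈ π.plain, x ≤ y}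

lemma lowOverlined_eq (h : π.plain ≠ 0) :
    π.lowOverlined = {x ∈ π.overlined | x ≤ π.largest} :=
  filter_congr fun _ _ => exists_le_plain_iff h

lemma lowOverlined_subset_togglable (h : π.plain ≠ 0) : π.lowOverlined ⊆ π.togglable :=
  lowOverlined_eq h ▸ subset_union_left

lemma neg_one_pow_card_lowOverlined_toggleAt (h : π.plain ≠ 0) (hv : v ∈ π.togglable) :
    (-1 : ℤ) ^ #(π.toggleAt v hv).lowOverlined = -(-1) ^ #π.lowOverlined := by
  have hvN := le_largest_of_mem_togglable hv
  rw [lowOverlined_eq (plain_toggleAt_ne_zero hv h), lowOverlined_eq h, largest_toggleAt hv h]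
  by_cases hO : v ∈ π.overlined
  · have hmem : v ∈ {x ∈ π.overlined | x ≤ π.largest} := mem_filter.2 ⟨hO, hvN⟩
    rw [overlined_toggleAt_of_mem hv hO, filter_erase, ← card_erase_add_one hmem, pow_succ]
    ring
  · rw [overlined_toggleAt_of_notMem hv hO, filter_insert, if_pos hvN,
      card_insert_of_notMem fun hv' => hO (mem_filter.1 hv').1, pow_succ]
    ring

lemma togglable_eq_empty_iff (h : π.plain ≠ 0) :
    π.togglable = ∅ ↔ π.plain = {π.largest} ∧ ∀ x ∈ π.overlined, π.largest < x := by
  rw [togglable, union_eq_empty, filter_eq_empty_iff, Multiset.toFinset_eq_empty,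
    plain_eq_largest_cons_rest h, ← Multiset.cons_zero, Multiset.cons_inj_right]
  simp only [not_le, and_comm]

lemma sum_neg_one_pow_card_lowOverlined_eq_card_togglable_eq_empty :
    ∑ π ∈ {π : Overpartition n | π.plain ≠ 0}, (-1 : ℤ) ^ #π.lowOverlined =
      #{π : Overpartition n | π.plain ≠ 0 ∧ π.togglable = ∅} := by
  rw [← sum_filter_add_sum_filter_not _ (fun π => π.togglable = ∅), filter_filter,
    filter_filter]
  have hfixed (π : Overpartition n) (hπ : π.plain ≠ 0 ∧ π.togglable = ∅) :
      (-1 : ℤ) ^ #π.lowOverlined = 1 := by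
    have hsub := lowOverlined_subset_togglable hπ.1
    rw [hπ.2, subset_empty] at hsub
    rw [hsub, card_empty, pow_zero]
  rw [sum_congr rfl fun π hπ => hfixed π (mem_filter.1 hπ).2, sum_const, nsmul_one,
    add_eq_left]
  refine sum_involution (fun π hπ => π.toggle (nonempty_iff_ne_empty.2 (mem_filter.1 hπ).2.2))
    (fun π hπ => ?_) (fun π hπ _ => toggleAt_ne _) (fun π hπ => ?_) (fun π hπ => ?_)
  · rw [toggle, neg_one_pow_card_lowOverlined_toggleAt (mem_filter.1 hπ).2.1, add_neg_cancel]
  · obtain ⟨h, hne⟩ := (mem_filter.1 hπ).2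
    simp only [mem_filter, mem_univ, true_and, toggle, togglable_toggleAt _ h]
    exact ⟨plain_toggleAt_ne_zero _ h, hne⟩
  · exact toggle_toggle (mem_filter.1 hπ).2.1 _ _

lemma parts_toPartition_of_plain_eq {m : ℕ} (hπ : π.plain = {m}) :
    π.toPartition.parts = m ::ₘ π.overlined.val := by
  rw [← Multiset.singleton_add, ← hπ]
  rfl

lemma exists_togglable_eq_empty_toPartition_eq (hn : 1 ≤ n) (p : n.Partition)
    (hp : p.parts.Nodup) :
    ∃ π : Overpartition n, (π.plain ≠ 0 ∧ π.togglable = ∅) ∧ π.toPartition = p := by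
  have hne : p.parts ≠ 0 := by
    rintro h0
    have := p.parts_sum
    rw [h0, Multiset.sum_zero] at this
    omega
  obtain ⟨m, hm, hmin⟩ :=
    p.parts.toFinset.exists_min_image id (Multiset.toFinset_nonempty.2 hne)
  rw [Multiset.mem_toFinset] at hm
  let π : Overpartition n :=
    { overlined := ⟨p.parts.erase m, hp.erase m⟩
      plain := {m}
      over_pos := fun _ hx => p.parts_pos (Multiset.mem_of_mem_erase hx)
      plain_pos := by simpa using p.parts_pos hm
      sum_eq := by
        rw [sum_eq_multiset_sum, Multiset.map_id', Multiset.sum_singleton, add_comm,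
          Multiset.sum_erase hm, p.parts_sum] }
  have hπ : π.plain = {m} := rfl
  have hlargest : π.largest = m := Multiset.sup_singleton
  refine ⟨π, ⟨by simp [hπ], ?_⟩, Nat.Partition.ext ?_⟩
  · rw [togglable_eq_empty_iff (by simp [hπ]), hlargest]
    refine ⟨hπ, fun x hx => ?_⟩
    obtain ⟨hxm, hx⟩ := (hp.mem_erase_iff).1 hx
    exact lt_of_le_of_ne (hmin x (Multiset.mem_toFinset.2 hx)) (Ne.symm hxm)
  · rw [parts_toPartition_of_plain_eq hπ]
    exact Multiset.cons_erase hm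

lemma card_togglable_eq_empty_eq_card_nodup (hn : 1 ≤ n) :
    #{π : Overpartition n | π.plain ≠ 0 ∧ π.togglable = ∅} =
      #{p : n.Partition | p.parts.Nodup} := by
  have hfixed {π : Overpartition n} (hπ : π.plain ≠ 0 ∧ π.togglable = ∅) :
      π.plain = {π.largest} ∧ ∀ x ∈ π.overlined, π.largest < x :=
    (togglable_eq_empty_iff hπ.1).1 hπ.2
  refine card_bij (fun π _ => π.toPartition) (fun π hπ => ?_)
    (fun π₁ hπ₁ π₂ hπ₂ h => ?_) (fun p hp => ?_)
  · obtain ⟨hπ, hlt⟩ := hfixed (mem_filter.1 hπ).2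
    rw [mem_filter, parts_toPartition_of_plain_eq hπ, Multiset.nodup_cons]
    exact ⟨mem_univ _, fun hmem => lt_irrefl _ (hlt _ hmem), π.overlined.nodup⟩
  · obtain ⟨hπ₁, hlt₁⟩ := hfixed (mem_filter.1 hπ₁).2
    obtain ⟨hπ₂, hlt₂⟩ := hfixed (mem_filter.1 hπ₂).2
    have hparts := congrArg Nat.Partition.parts h
    rw [parts_toPartition_of_plain_eq hπ₁, parts_toPartition_of_plain_eq hπ₂,
      Multiset.cons_eq_cons_iff_of_forall_lt hlt₁ hlt₂] at hparts
    exact ext (val_inj.1 hparts.2) (by rw [hπ₁, hπ₂, hparts.1])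
  · obtain ⟨π, hπ, rfl⟩ := exists_togglable_eq_empty_toPartition_eq hn p (mem_filter.1 hp).2
    exact ⟨π, mem_filter.2 ⟨mem_univ _, hπ⟩, rfl⟩

end Overpartition

theorem stmt_5 (n : ℕ) (hn : 1 ≤ n) :
    (Nat.card {π : Overpartition n // π.plain ≠ 0 ∧
        Even ((π.overlined.filter (fun x => ∃ y ∈ π.plain, x ≤ y)).card)} : ℤ) -
      Nat.card {π : Overpartition n // π.plain ≠ 0 ∧
        Odd ((π.overlined.filter (fun x => ∃ y ∈ π.plain, x ≤ y)).card)} =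
    Nat.card {p : n.Partition // p.parts.Nodup} := by
  simp only [Nat.card_eq_fintype_card, Fintype.card_subtype]
  rw [← Overpartition.card_togglable_eq_empty_eq_card_nodup hn,
    ← Overpartition.sum_neg_one_pow_card_lowOverlined_eq_card_togglable_eq_empty,
    sum_neg_one_pow_eq_card_even_sub_card_odd, filter_filter, filter_filter]
  rfl
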